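/- For every integer n > 2, the number of integers k ≥ 3 such that n appears in the chain 𝔠_k (i.e., n = G_i(k) for some i ≥ 2) equals |𝒜(n)| − 2. -/
import Mathlib


/-- Fibonacci-like polynomials evaluated at an integer:
`G 0 k = 1`, `G 1 k = k`, `G (i+2) k = k * G (i+1) k - G i k`. -/
def G : ℕ → ℤ → ℤ
  | 0, _ => 1
  | 1, k => k
  | (i + 2), k => k * G (i + 1) k - G i k

/-- `A n = {a : 1 ≤ a < n, n ∣ a² − 1, a ∣ n² − 1}`. -/
def A (n : ℕ) : Finset ℕ :=
  (Finset.Ico 1 n).filter (fun a => (n : ℤ) ∣ (a : ℤ) ^ 2 - 1 ∧ (a : ℤ) ∣ (n : ℤ) ^ 2 - 1)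

lemma G_zero (k : ℤ) : G 0 k = 1 := rfl

lemma G_one (k : ℤ) : G 1 k = k := rfl

lemma G_add_two (i : ℕ) (k : ℤ) : G (i + 2) k = k * G (i + 1) k - G i k := rfl

/-- The quadratic invariant along a chain. -/
lemma G_inv (k : ℤ) : ∀ i, (G i k) ^ 2 + (G (i + 1) k) ^ 2 - k * G i k * G (i + 1) k = 1
  | 0 => by
      have h1 : G (0 + 1) k = k := rfl
      rw [G_zero, h1]; ring
  | (i + 1) => by
      have h := G_inv k i
      rw [G_add_two]
      linear_combination h

/-- Monotonicity of the chain for `k ≥ 3`. -/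
lemma G_mono (k : ℤ) (hk : 3 ≤ k) : ∀ i, 1 ≤ G i k ∧ G i k < G (i + 1) k
  | 0 => by rw [G_zero, G_one]; exact ⟨le_refl 1, by linarith⟩
  | (i + 1) => by
      obtain ⟨h1, h2⟩ := G_mono k hk i
      refine ⟨by linarith, ?_⟩
      rw [G_add_two]
      nlinarith

/-- Vieta descent: every solution of the invariant with `1 ≤ x < y` is a
consecutive pair in the chain. -/
lemma descent (k : ℤ) (hk : 3 ≤ k) : ∀ N : ℕ, ∀ x y : ℤ, y ≤ (N : ℤ) → 1 ≤ x → x < y →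
    x ^ 2 + y ^ 2 - k * x * y = 1 → ∃ i, x = G i k ∧ y = G (i + 1) k := by
  intro N
  induction N with
  | zero =>
      intro x y hy hx hxy _
      exfalso
      have : (0 : ℤ) < y := by linarith
      simp at hy
      linarith
  | succ N ih =>
      intro x y hyN hx hxy hinv
      rcases eq_or_lt_of_le hx with h1 | h2
      · -- x = 1, so y = k
        have hx1 : x = 1 := h1.symm
        subst hx1
        have hz : y * (y - k) = 0 := by linear_combination hinv
        rcases mul_eq_zero.mp hz with h | h
        · exfalso; linarith
        · exact ⟨0, by rw [G_zero, G_one]; constructor <;> linarith⟩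
      · set x' := k * x - y with hx'
        have hmul : x' * y = x ^ 2 - 1 := by rw [hx']; linear_combination -hinv
        have hy0 : (0 : ℤ) < y := by linarith
        have hx'pos : 1 ≤ x' := by
          by_contra h
          push_neg at h
          have h0 : x' ≤ 0 := by linarith
          have : x' * y ≤ 0 := mul_nonpos_of_nonpos_of_nonneg h0 (le_of_lt hy0)
          nlinarith
        have hx'lt : x' < x := by
          have h3 : x' * y < x * y := by rw [hmul]; nlinarith
          exact lt_of_mul_lt_mul_right h3 (le_of_lt hy0)
        have hinv' : x' ^ 2 + x ^ 2 - k * x' * x = 1 := by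
          rw [hx']; linear_combination hinv
        have hxN : x ≤ (N : ℤ) := by
          push_cast at hyN ⊢
          linarith
        obtain ⟨i, hi1, hi2⟩ := ih x' x hxN hx'pos hx'lt hinv'
        refine ⟨i + 1, hi2, ?_⟩
        rw [G_add_two, ← hi2, ← hi1]
        rw [hx'] at hi1 ⊢
        linarith

lemma mem_A_iff (n a : ℕ) :
    a ∈ A n ↔ 1 ≤ a ∧ a < n ∧ (n : ℤ) ∣ (a : ℤ) ^ 2 - 1 ∧ (a : ℤ) ∣ (n : ℤ) ^ 2 - 1 := by
  simp [A, Finset.mem_filter, Finset.mem_Ico, and_assoc]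

lemma one_mem_A (n : ℕ) (hn : 2 < n) : 1 ∈ A n := by
  rw [mem_A_iff]
  exact ⟨le_refl 1, by omega, by norm_num, one_dvd _⟩

lemma nsub_mem_A (n : ℕ) (hn : 2 < n) : n - 1 ∈ A n := by
  rw [mem_A_iff]
  have hc : ((n - 1 : ℕ) : ℤ) = (n : ℤ) - 1 := by
    have : 1 ≤ n := by omega
    push_cast [this]; ring
  refine ⟨by omega, by omega, ?_, ?_⟩
  · rw [hc]; exact ⟨(n : ℤ) - 2, by ring⟩
  · rw [hc]; exact ⟨(n : ℤ) + 1, by ring⟩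

/-- From an element of `A n` distinct from `1` and `n-1` we get a valid `k`. -/
lemma key_forward (n a : ℕ) (hn : 2 < n) (ha2 : 2 ≤ a) (han : a + 2 ≤ n)
    (h1 : (n : ℤ) ∣ (a : ℤ) ^ 2 - 1) (h2 : (a : ℤ) ∣ (n : ℤ) ^ 2 - 1) :
    ∃ k : ℤ, (a : ℤ) ^ 2 + (n : ℤ) ^ 2 - 1 = (a : ℤ) * n * k ∧ 3 ≤ k ∧
      ∃ i : ℕ, 2 ≤ i ∧ G i k = (n : ℤ) := by
  have haZ : (2 : ℤ) ≤ (a : ℤ) := by exact_mod_cast ha2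
  have hanZ : (a : ℤ) + 2 ≤ (n : ℤ) := by exact_mod_cast han
  obtain ⟨c, hc⟩ := id h1
  have hcop : IsCoprime (a : ℤ) (n : ℤ) := ⟨(a : ℤ), -c, by linear_combination hc⟩
  have dvd1 : (a : ℤ) ∣ (a : ℤ) ^ 2 + (n : ℤ) ^ 2 - 1 := by
    have heq : (a : ℤ) ^ 2 + (n : ℤ) ^ 2 - 1 = (a : ℤ) * a + ((n : ℤ) ^ 2 - 1) := by ring
    rw [heq]
    exact dvd_add (Dvd.intro _ rfl) h2
  have dvd2 : (n : ℤ) ∣ (a : ℤ) ^ 2 + (n : ℤ) ^ 2 - 1 := by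
    have heq : (a : ℤ) ^ 2 + (n : ℤ) ^ 2 - 1 = ((a : ℤ) ^ 2 - 1) + (n : ℤ) * n := by ring
    rw [heq]
    exact dvd_add h1 (Dvd.intro _ rfl)
  obtain ⟨k, hk⟩ := hcop.mul_dvd dvd1 dvd2
  refine ⟨k, hk, ?_, ?_⟩
  · -- 3 ≤ k
    by_contra h
    push_neg at h
    have hk2 : k ≤ 2 := by linarith
    have hpos : (0 : ℤ) < (a : ℤ) * n := by positivity
    nlinarith [sq_nonneg ((n : ℤ) - (a : ℤ) - 2)]
  · have hk3 : (3 : ℤ) ≤ k := by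
      by_contra h
      push_neg at h
      have hk2 : k ≤ 2 := by linarith
      have hpos : (0 : ℤ) < (a : ℤ) * n := by positivity
      nlinarith [sq_nonneg ((n : ℤ) - (a : ℤ) - 2)]
    have hinv : (a : ℤ) ^ 2 + (n : ℤ) ^ 2 - k * (a : ℤ) * (n : ℤ) = 1 := by
      linear_combination hk
    obtain ⟨i, hi1, hi2⟩ := descent k hk3 n (a : ℤ) (n : ℤ) (le_refl _)
      (by linarith) (by linarith) hinv
    refine ⟨i + 1, ?_, hi2.symm⟩
    rcases i with _ | i
    · exfalso
      rw [G_zero] at hi1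
      linarith
    · omega

/-- From a valid `k` we get a middle element of `A n`. -/
lemma key_backward (n : ℕ) (hn : 2 < n) (k : ℤ) (hk : 3 ≤ k) (i : ℕ) (hi : 2 ≤ i)
    (hG : G i k = (n : ℤ)) :
    ∃ a : ℕ, 2 ≤ a ∧ a + 2 ≤ n ∧ (n : ℤ) ∣ (a : ℤ) ^ 2 - 1 ∧ (a : ℤ) ∣ (n : ℤ) ^ 2 - 1 ∧
      (a : ℤ) ^ 2 + (n : ℤ) ^ 2 - 1 = (a : ℤ) * n * k := by
  have hn3 : (3 : ℤ) ≤ (n : ℤ) := by exact_mod_cast hn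
  obtain ⟨j, rfl⟩ : ∃ j, i = j + 2 := ⟨i - 2, by omega⟩
  set b := G (j + 1) k with hb
  obtain ⟨hj1, hj2⟩ := G_mono k hk j
  have hj3 : G (j + 1) k < G (j + 2) k := (G_mono k hk (j + 1)).2
  have hb2 : 2 ≤ b := by rw [hb]; linarith
  have hbn : b < (n : ℤ) := by rw [hb, ← hG]; exact hj3
  have hinv : b ^ 2 + (n : ℤ) ^ 2 - k * b * (n : ℤ) = 1 := by
    have := G_inv k (j + 1)
    rwa [hG] at this
  have hbn2 : b + 2 ≤ (n : ℤ) := by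
    by_contra h
    push_neg at h
    have hb1 : b = (n : ℤ) - 1 := by linarith
    have h2 : ((n : ℤ) - 1) ^ 2 + (n : ℤ) ^ 2 - k * ((n : ℤ) - 1) * (n : ℤ) = 1 := by
      rw [← hb1]; exact hinv
    have h3 : 3 * (((n : ℤ) - 1) * n) ≤ k * (((n : ℤ) - 1) * n) := by
      apply mul_le_mul_of_nonneg_right hk
      nlinarith
    nlinarith
  refine ⟨b.toNat, ?_, ?_, ?_, ?_, ?_⟩
  · omega
  · omega
  · have hbt : ((b.toNat : ℤ)) = b := Int.toNat_of_nonneg (by linarith)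
    rw [hbt]
    exact ⟨k * b - n, by linear_combination hinv⟩
  · have hbt : ((b.toNat : ℤ)) = b := Int.toNat_of_nonneg (by linarith)
    rw [hbt]
    exact ⟨k * n - b, by linear_combination hinv⟩
  · have hbt : ((b.toNat : ℤ)) = b := Int.toNat_of_nonneg (by linarith)
    rw [hbt]
    linear_combination hinv

theorem stmt_7 (n : ℕ) (hn : 2 < n) :
    {k : ℤ | 3 ≤ k ∧ ∃ i : ℕ, 2 ≤ i ∧ G i k = (n : ℤ)}.ncard = (A n).card - 2 := by
  classical
  set T : Finset ℕ := ((A n).erase (n - 1)).erase 1 with hT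
  set g : ℕ → ℤ := fun a => ((a : ℤ) ^ 2 + (n : ℤ) ^ 2 - 1) / ((a : ℤ) * n) with hg
  have hTmem : ∀ a : ℕ, a ∈ T ↔ 2 ≤ a ∧ a + 2 ≤ n ∧
      (n : ℤ) ∣ (a : ℤ) ^ 2 - 1 ∧ (a : ℤ) ∣ (n : ℤ) ^ 2 - 1 := by
    intro a
    rw [hT, Finset.mem_erase, Finset.mem_erase, mem_A_iff]
    constructor
    · rintro ⟨h1, h2, h3, h4, h5, h6⟩
      exact ⟨by omega, by omega, h5, h6⟩
    · rintro ⟨h1, h2, h3, h4⟩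
      exact ⟨by omega, by omega, by omega, by omega, h3, h4⟩
  -- exact division: for a ∈ T with the product identity, g a is the quotient
  have hgeq : ∀ (a : ℕ) (k : ℤ), 2 ≤ a →
      (a : ℤ) ^ 2 + (n : ℤ) ^ 2 - 1 = (a : ℤ) * n * k → g a = k := by
    intro a k ha2 heq
    have hne : ((a : ℤ) * n) ≠ 0 := by positivity
    rw [hg]
    simp only
    rw [heq, Int.mul_ediv_cancel_left _ hne]
  have hSeq : {k : ℤ | 3 ≤ k ∧ ∃ i : ℕ, 2 ≤ i ∧ G i k = (n : ℤ)} = ↑(T.image g) := by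
    ext k
    simp only [Set.mem_setOf_eq, Finset.coe_image, Set.mem_image, Finset.mem_coe]
    constructor
    · rintro ⟨hk3, i, hi2, hGi⟩
      obtain ⟨a, ha2, han, hd1, hd2, heq⟩ := key_backward n hn k hk3 i hi2 hGi
      exact ⟨a, (hTmem a).2 ⟨ha2, han, hd1, hd2⟩, hgeq a k ha2 heq⟩
    · rintro ⟨a, haT, rfl⟩
      obtain ⟨ha2, han, hd1, hd2⟩ := (hTmem a).1 haT
      obtain ⟨k', heq, hk3, hex⟩ := key_forward n a hn ha2 han hd1 hd2
      rw [hgeq a k' ha2 heq]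
      exact ⟨hk3, hex⟩
  have hinj : Set.InjOn g ↑T := by
    intro a ha b hb hab
    obtain ⟨ha2, han, had1, had2⟩ := (hTmem a).1 (Finset.mem_coe.mp ha)
    obtain ⟨hb2, hbn, hbd1, hbd2⟩ := (hTmem b).1 (Finset.mem_coe.mp hb)
    obtain ⟨k₁, heq₁, hk₁3, _⟩ := key_forward n a hn ha2 han had1 had2
    obtain ⟨k₂, heq₂, hk₂3, _⟩ := key_forward n b hn hb2 hbn hbd1 hbd2
    have hkk : k₁ = k₂ := by
      rw [← hgeq a k₁ ha2 heq₁, ← hgeq b k₂ hb2 heq₂, hab]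
    rw [← hkk] at heq₂
    have hfac : ((a : ℤ) - b) * ((a : ℤ) + b - n * k₁) = 0 := by
      linear_combination heq₁ - heq₂
    rcases mul_eq_zero.mp hfac with h | h
    · have : (a : ℤ) = b := by linarith
      exact_mod_cast this
    · exfalso
      have hsum : (a : ℤ) + b = n * k₁ := by linarith
      have hprod : (a : ℤ) * b = (n : ℤ) ^ 2 - 1 := by
        linear_combination (a : ℤ) * hsum - heq₁
      have haZ : (2 : ℤ) ≤ (a : ℤ) := by exact_mod_cast ha2
      have hbZ : (2 : ℤ) ≤ (b : ℤ) := by exact_mod_cast hb2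
      have haN : (a : ℤ) ≤ (n : ℤ) - 2 := by
        have : (a : ℤ) + 2 ≤ (n : ℤ) := by exact_mod_cast han
        linarith
      have hbN : (b : ℤ) ≤ (n : ℤ) - 2 := by
        have : (b : ℤ) + 2 ≤ (n : ℤ) := by exact_mod_cast hbn
        linarith
      nlinarith [mul_le_mul haN hbN (by linarith) (by linarith : (0 : ℤ) ≤ (n : ℤ) - 2)]
  have h1mem : 1 ∈ (A n).erase (n - 1) :=
    Finset.mem_erase.mpr ⟨by omega, one_mem_A n hn⟩
  have hnmem : n - 1 ∈ A n := nsub_mem_A n hn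
  rw [hSeq, Set.ncard_coe_finset, Finset.card_image_of_injOn hinj, hT,
    Finset.card_erase_of_mem h1mem, Finset.card_erase_of_mem hnmem]
  omega
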